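/- arXiv:1007.4334 — 2 statements merged into one kernel-verified Lean document; each statement's English description precedes it below -/
import Mathlib

section
/- The function α ↦ 1/α + C(α,L,R) (extended by the value (ln L + ln R)/2 at α = 0) is strictly decreasing in α on ℝ, for fixed 0 < L < R. -/
/-!
With `m = (log L + log R) / 2` and `d = (log R - log L) / 2 > 0` we have
`L ^ (-α) = e^(-mα) e^(dα)` and `R ^ (-α) = e^(-mα) e^(-dα)`, so the function equals
`m - d · ℒ(dα)` where `ℒ t = coth t - 1/t` is the Langevin function. `ℒ` is odd, positive on
`(0, ∞)` because `tanh t < t`, and strictly increasing there because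
`ℒ' t = 1/t² - 1/sinh² t > 0` by `t < sinh t`.
-/

open Real

/-- At `t = 0` both terms are junk values `0`, which gives the continuous extension
`langevin 0 = 0`. -/
noncomputable def langevin (t : ℝ) : ℝ := cosh t / sinh t - t⁻¹

lemma langevin_zero : langevin 0 = 0 := by simp [langevin]

lemma langevin_neg (t : ℝ) : langevin (-t) = -langevin t := by
  simp only [langevin, cosh_neg, sinh_neg, div_neg, inv_neg]
  ring

lemma sinh_lt_mul_cosh {t : ℝ} (ht : 0 < t) : sinh t < t * cosh t := by
  have hmono : StrictMonoOn (fun s => s * cosh s - sinh s) (Set.Ici 0) := by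
    refine strictMonoOn_of_deriv_pos (convex_Ici 0) (by fun_prop) fun s hs => ?_
    rw [interior_Ici] at hs
    have hderiv : HasDerivAt (fun s => s * cosh s - sinh s) (s * sinh s) s :=
      (((hasDerivAt_id s).mul (hasDerivAt_cosh s)).sub (hasDerivAt_sinh s)).congr_deriv
        (by simp)
    rw [hderiv.deriv]
    exact mul_pos hs (sinh_pos_iff.2 hs)
  simpa using hmono Set.self_mem_Ici ht.le ht

lemma langevin_pos {t : ℝ} (ht : 0 < t) : 0 < langevin t := by
  have hs : 0 < sinh t := sinh_pos_iff.2 ht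
  rw [langevin, sub_pos, inv_eq_one_div, div_lt_div_iff₀ ht hs]
  linarith [sinh_lt_mul_cosh ht]

lemma hasDerivAt_langevin {t : ℝ} (ht : t ≠ 0) :
    HasDerivAt langevin (1 / t ^ 2 - 1 / sinh t ^ 2) t := by
  have hs : sinh t ≠ 0 := sinh_ne_zero.2 ht
  refine (((hasDerivAt_cosh t).div (hasDerivAt_sinh t) hs).sub
    (hasDerivAt_inv ht)).congr_deriv ?_
  field_simp
  rw [cosh_sq]
  ring

lemma langevin_strictMonoOn_Ioi : StrictMonoOn langevin (Set.Ioi 0) := by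
  refine strictMonoOn_of_deriv_pos (convex_Ioi 0)
    (fun t ht => (hasDerivAt_langevin (ne_of_gt ht)).continuousAt.continuousWithinAt)
    fun t ht => ?_
  rw [interior_Ioi] at ht
  rw [(hasDerivAt_langevin (ne_of_gt ht)).deriv, sub_pos]
  exact one_div_lt_one_div_of_lt (pow_pos ht 2)
    (pow_lt_pow_left₀ (self_lt_sinh_iff.2 ht) ht.le two_ne_zero)

lemma langevin_strictMono : StrictMono langevin := by
  refine strictMono_of_odd_strictMonoOn_nonneg langevin_neg fun x hx y _ hxy => ?_
  rcases (Set.mem_Ici.1 hx).eq_or_lt with rfl | hx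
  · rw [langevin_zero]
    exact langevin_pos hxy
  · exact langevin_strictMonoOn_Ioi hx (hx.trans hxy) hxy

lemma one_div_add_rpow_ratio_eq_langevin {L R α : ℝ} (hL : 0 < L) (hR : 0 < R) (hLR : L ≠ R)
    (hα : α ≠ 0) :
    1 / α + (log L * L ^ (-α) - log R * R ^ (-α)) / (L ^ (-α) - R ^ (-α)) =
      (log L + log R) / 2 - (log R - log L) / 2 * langevin ((log R - log L) / 2 * α) := by
  have hlog : log L ≠ log R := fun h => hLR (log_injOn_pos hL hR h)
  rw [rpow_def_of_pos hL, rpow_def_of_pos hR]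
  generalize log L = l at *
  generalize log R = r at *
  obtain ⟨m, d, rfl, rfl⟩ : ∃ m d, l = m - d ∧ r = m + d :=
    ⟨(l + r) / 2, (r - l) / 2, by ring, by ring⟩
  have hd : d ≠ 0 := by
    rintro rfl
    simp at hlog
  have hs : sinh (d * α) ≠ 0 := sinh_ne_zero.2 (mul_ne_zero hd hα)
  have hE : exp (-(m * α)) ≠ 0 := exp_ne_zero _
  have hl : exp ((m - d) * -α) = exp (-(m * α)) * (cosh (d * α) + sinh (d * α)) := by
    rw [cosh_add_sinh, ← exp_add]
    ring_nf
  have hr : exp ((m + d) * -α) = exp (-(m * α)) * (cosh (d * α) - sinh (d * α)) := by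
    rw [cosh_sub_sinh, ← exp_add]
    ring_nf
  rw [hl, hr, langevin, show (m + d - (m - d)) / 2 = d by ring,
    show (m - d + (m + d)) / 2 = m by ring,
    show ∀ E c s : ℝ, E * (c + s) - E * (c - s) = 2 * E * s by intros; ring]
  field_simp
  ring

theorem G_strictAnti (L R : ℝ) (hL : 0 < L) (hLR : L < R) :
    StrictAnti (fun a : ℝ =>
      if a = 0 then (Real.log L + Real.log R) / 2
      else 1 / a +
        (Real.log L * L ^ (-a) - Real.log R * R ^ (-a)) / (L ^ (-a) - R ^ (-a))) := by
  have hd : 0 < (log R - log L) / 2 := by linarith [log_lt_log hL hLR]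
  have hG : ∀ a : ℝ, (if a = 0 then (log L + log R) / 2
      else 1 / a + (log L * L ^ (-a) - log R * R ^ (-a)) / (L ^ (-a) - R ^ (-a))) =
      (log L + log R) / 2 - (log R - log L) / 2 * langevin ((log R - log L) / 2 * a) := by
    intro a
    split_ifs with ha
    · simp [ha, langevin_zero]
    · exact one_div_add_rpow_ratio_eq_langevin hL (hL.trans hLR) hLR.ne ha
  intro a b hab
  simp only [hG]
  have hlt := langevin_strictMono (mul_lt_mul_of_pos_left hab hd)
  exact sub_lt_sub_left (mul_lt_mul_of_pos_left hlt hd) _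
end

section
/- For fixed 0 < L < R, the value 1/α + C(α,L,R) always lies strictly between ln L and ln R for every real α (with the α = 0 value taken as (ln L + ln R)/2). -/
open Real

theorem G_between (L R : ℝ) (hL : 0 < L) (hLR : L < R) (a : ℝ) :
    Real.log L <
      (if a = 0 then (Real.log L + Real.log R) / 2
       else 1 / a +
        (Real.log L * L ^ (-a) - Real.log R * R ^ (-a)) / (L ^ (-a) - R ^ (-a))) ∧
    (if a = 0 then (Real.log L + Real.log R) / 2
     else 1 / a +
      (Real.log L * L ^ (-a) - Real.log R * R ^ (-a)) / (L ^ (-a) - R ^ (-a))) <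
      Real.log R := by
  have hR : 0 < R := hL.trans hLR
  have hlog : Real.log L < Real.log R := Real.log_lt_log hL hLR
  by_cases h : a = 0
  · simp only [if_pos h]
    constructor <;> linarith
  · simp only [if_neg h]
    set l := Real.log L with hl
    set r := Real.log R with hr
    have hLp : L ^ (-a) = Real.exp (l * -a) := Real.rpow_def_of_pos hL _
    have hRp : R ^ (-a) = Real.exp (r * -a) := Real.rpow_def_of_pos hR _
    rw [hLp, hRp]
    set p := Real.exp (l * -a) with hp
    set q := Real.exp (r * -a) with hq
    have hp0 : 0 < p := Real.exp_pos _
    have hq0 : 0 < q := Real.exp_pos _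
    have hpq : p = q * Real.exp (a * (r - l)) := by
      rw [hp, hq, ← Real.exp_add]; ring_nf
    have hqp : q = p * Real.exp (-(a * (r - l))) := by
      rw [hp, hq, ← Real.exp_add]; ring_nf
    have ht0 : a * (r - l) ≠ 0 := mul_ne_zero h (by linarith)
    have ht1 : a * (r - l) + 1 < Real.exp (a * (r - l)) :=
      Real.add_one_lt_exp ht0
    have ht2 : -(a * (r - l)) + 1 < Real.exp (-(a * (r - l))) :=
      Real.add_one_lt_exp (neg_ne_zero.mpr ht0)
    have hden : 0 < a * (p - q) := by
      rcases lt_or_gt_of_ne h with ha | ha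
      · nlinarith [mul_pos hq0 (sub_pos.mpr hlog)]
      · nlinarith [mul_pos hq0 (sub_pos.mpr hlog)]
    have hpqne : p - q ≠ 0 := by
      intro hc
      rw [hc, mul_zero] at hden
      exact lt_irrefl _ hden
    constructor
    · rw [← sub_pos]
      have key : 1 / a + (l * p - r * q) / (p - q) - l
          = ((p - q) - a * (r - l) * q) / (a * (p - q)) := by
        field_simp
        ring
      rw [key]
      apply div_pos _ hden
      nlinarith
    · rw [← sub_neg]
      have key : 1 / a + (l * p - r * q) / (p - q) - r
          = ((p - q) - a * (r - l) * p) / (a * (p - q)) := by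
        field_simp
        ring
      rw [key]
      apply div_neg_of_neg_of_pos _ hden
      nlinarith
end
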